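/- arXiv:0902.1626 — 4 statements merged into one kernel-verified Lean document; each statement's English description precedes it below -/
import Mathlib

section
/- Let X be a set and let 𝒞 be a nonempty collection of subsets of X that is closed under pairwise intersection (a π-system, where we allow ∅ ∈ 𝒞). Suppose there is a sequence (U_n)_{n∈ℕ} of members of 𝒞 with ⋃_n U_n = X. For U ∈ 𝒞 let σ_U denote the σ-algebra on X generated by {V ∈ 𝒞 : V ⊆ U}, and let σ denote the σ-algebra on X generated by 𝒞. Suppose that for each U ∈ 𝒞 we are given a finite measure μ_U on (X, σ_U) with μ_U(X ∖ U) = 0, such that μ_U(W) = μ_V(W) whenever U, V, W ∈ 𝒞 and W ⊆ U ∩ V. Then there exists a unique σ-finite measure μ on (X, σ) such that for every U ∈ 𝒞 and every A ∈ σ_U with A ⊆ U one has μ(A) = μ_U(A). -/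
open MeasureTheory

/-- If `T` is measurable and `V ∩ T` is measurable for every generator `V`,
then `A ∩ T` is measurable for every `A` in the generated σ-algebra. -/
lemma auxInter {X : Type*} (G : Set (Set X)) (m : MeasurableSpace X) (T : Set X)
    (hT : MeasurableSet[m] T) (hG : ∀ V ∈ G, MeasurableSet[m] (V ∩ T)) :
    ∀ A : Set X, MeasurableSet[MeasurableSpace.generateFrom G] A →
      MeasurableSet[m] (A ∩ T) := by
  intro A hA
  refine MeasurableSpace.generateFrom_induction G
    (fun s _ => MeasurableSet[m] (s ∩ T)) (fun t ht _ => hG t ht) ?_ ?_ ?_ A hA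
  · simpa using (MeasurableSet.empty : MeasurableSet[m] ∅)
  · intro t _ h
    have : tᶜ ∩ T = T \ (t ∩ T) := by ext x; simp; tauto
    rw [this]; exact hT.diff h
  · intro s _ h
    rw [Set.iUnion_inter]
    exact MeasurableSet.iUnion h

/-- Gluing compatible finite measures on a π-system with countable cover into a unique
σ-finite measure on the generated σ-algebra. -/
theorem stmt_0 {X : Type*} (𝒞 : Set (Set X)) (hne : 𝒞.Nonempty)
    (hpi : ∀ U ∈ 𝒞, ∀ V ∈ 𝒞, U ∩ V ∈ 𝒞)
    (U : ℕ → Set X) (hUmem : ∀ n, U n ∈ 𝒞) (hUcov : (⋃ n, U n) = Set.univ)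
    (μ : (W : Set X) → @Measure X (MeasurableSpace.generateFrom {V | V ∈ 𝒞 ∧ V ⊆ W}))
    (hfin : ∀ W ∈ 𝒞, μ W Set.univ ≠ ⊤)
    (hsupp : ∀ W ∈ 𝒞, μ W Wᶜ = 0)
    (hcomp : ∀ U' ∈ 𝒞, ∀ V ∈ 𝒞, ∀ W ∈ 𝒞, W ⊆ U' ∩ V → μ U' W = μ V W) :
    ∃! ν : @Measure X (MeasurableSpace.generateFrom 𝒞),
      @SigmaFinite X (MeasurableSpace.generateFrom 𝒞) ν ∧
      ∀ W ∈ 𝒞, ∀ A : Set X,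
        MeasurableSet[MeasurableSpace.generateFrom {V | V ∈ 𝒞 ∧ V ⊆ W}] A → A ⊆ W →
        ν A = μ W A := by
  classical
  -- notation
  set σ' : Set X → MeasurableSpace X :=
    fun S => MeasurableSpace.generateFrom {V | V ∈ 𝒞 ∧ V ⊆ S} with hσ'
  set σ0 : MeasurableSpace X := MeasurableSpace.generateFrom 𝒞 with hσ0
  have hmem : ∀ S : Set X, ∀ V ∈ 𝒞, V ⊆ S → MeasurableSet[σ' S] V := by
    intro S V hV hVS
    exact MeasurableSpace.measurableSet_generateFrom ⟨hV, hVS⟩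
  have hσle : ∀ S : Set X, σ' S ≤ σ0 := by
    intro S
    exact MeasurableSpace.generateFrom_le fun t ht =>
      MeasurableSpace.measurableSet_generateFrom ht.1
  have hσmono : ∀ S T : Set X, S ⊆ T → σ' S ≤ σ' T := by
    intro S T hST
    exact MeasurableSpace.generateFrom_le fun t ht =>
      hmem T t ht.1 (ht.2.trans hST)
  -- the compatibility lemma
  have L : ∀ W ∈ 𝒞, ∀ W' ∈ 𝒞, ∀ A : Set X,
      MeasurableSet[σ' (W ∩ W')] A → A ⊆ W ∩ W' → μ W A = μ W' A := by
    intro W hW W' hW' A hA hAsub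
    set S := W ∩ W' with hS
    have hSmem : S ∈ 𝒞 := hpi W hW W' hW'
    have le1 : σ' S ≤ σ' W := hσmono S W Set.inter_subset_left
    have le2 : σ' S ≤ σ' W' := hσmono S W' Set.inter_subset_right
    have hSW : MeasurableSet[σ' W] S := hmem W S hSmem Set.inter_subset_left
    have hSW' : MeasurableSet[σ' W'] S := hmem W' S hSmem Set.inter_subset_right
    set ρ1 : @Measure X (σ' S) :=
      (@Measure.restrict X (σ' W) (μ W) S).trim le1 with hρ1
    set ρ2 : @Measure X (σ' S) :=
      (@Measure.restrict X (σ' W') (μ W') S).trim le2 with hρ2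
    have hρ1app : ∀ B : Set X, MeasurableSet[σ' S] B → ρ1 B = μ W (B ∩ S) := by
      intro B hB
      rw [hρ1, trim_measurableSet_eq le1 hB,
        @Measure.restrict_apply X (σ' W) (μ W) _ _ (le1 _ hB)]
    have hρ2app : ∀ B : Set X, MeasurableSet[σ' S] B → ρ2 B = μ W' (B ∩ S) := by
      intro B hB
      rw [hρ2, trim_measurableSet_eq le2 hB,
        @Measure.restrict_apply X (σ' W') (μ W') _ _ (le2 _ hB)]
    have hfin1 : @IsFiniteMeasure X (σ' S) ρ1 := by
      constructor
      rw [hρ1app Set.univ MeasurableSet.univ]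
      exact lt_of_le_of_lt (measure_mono (Set.subset_univ _))
        (lt_top_iff_ne_top.2 (hfin W hW))
    have hpiS : IsPiSystem {V | V ∈ 𝒞 ∧ V ⊆ S} := by
      intro V1 h1 V2 h2 _
      exact ⟨hpi V1 h1.1 V2 h2.1, Set.inter_subset_left.trans h1.2⟩
    have heq : ρ1 = ρ2 := by
      refine @ext_of_generate_finite X (σ' S) ρ1 ρ2 {V | V ∈ 𝒞 ∧ V ⊆ S} rfl hpiS hfin1 ?_ ?_
      · intro s hs
        rw [hρ1app s (MeasurableSpace.measurableSet_generateFrom hs),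
          hρ2app s (MeasurableSpace.measurableSet_generateFrom hs),
          Set.inter_eq_self_of_subset_left hs.2]
        exact hcomp W hW W' hW' s hs.1 hs.2
      · rw [hρ1app Set.univ MeasurableSet.univ, hρ2app Set.univ MeasurableSet.univ,
          Set.univ_inter]
        exact hcomp W hW W' hW' S hSmem subset_rfl
    have e1 : μ W A = ρ1 A := by
      rw [hρ1app A hA, Set.inter_eq_self_of_subset_left hAsub]
    have e2 : μ W' A = ρ2 A := by
      rw [hρ2app A hA, Set.inter_eq_self_of_subset_left hAsub]
    rw [e1, e2, heq]
  -- disjointification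
  set D : ℕ → Set X := disjointed U with hD
  have hDsub : ∀ n, D n ⊆ U n := disjointed_subset U
  have hDdisj : Pairwise (Function.onFun Disjoint D) := disjoint_disjointed U
  have hDuniv : ⋃ n, D n = Set.univ := by rw [hD, iUnion_disjointed, hUcov]
  have hDm : ∀ n, MeasurableSet[σ' (U n)] (D n) := by
    intro n
    have : D n = U n \ ⋃ i, ⋃ (_ : i < n), (U i ∩ U n) := by
      rw [hD, disjointed_eq_inter_compl]
      ext x; simp; tauto
    rw [this]
    exact (hmem (U n) (U n) (hUmem n) subset_rfl).diff
      (MeasurableSet.iUnion fun i => MeasurableSet.iUnion fun _ =>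
        hmem (U n) _ (hpi _ (hUmem i) _ (hUmem n)) Set.inter_subset_right)
  -- measurability of intersections
  have hmA : ∀ A : Set X, MeasurableSet[σ0] A → ∀ n,
      MeasurableSet[σ' (U n)] (A ∩ D n) := by
    intro A hA n
    have h1 : MeasurableSet[σ' (U n)] (A ∩ U n) :=
      auxInter 𝒞 (σ' (U n)) (U n) (hmem (U n) (U n) (hUmem n) subset_rfl)
        (fun V hV => hmem (U n) _ (hpi V hV _ (hUmem n)) Set.inter_subset_right) A hA
    have : A ∩ D n = (A ∩ U n) ∩ D n := by
      ext x
      exact ⟨fun h => ⟨⟨h.1, hDsub n h.2⟩, h.2⟩, fun h => ⟨h.1.1, h.2⟩⟩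
    rw [this]
    exact h1.inter (hDm n)
  -- the key sum formula for each μ W
  have hsum : ∀ W ∈ 𝒞, ∀ A : Set X, MeasurableSet[σ' W] A → A ⊆ W →
      μ W A = ∑' n, μ (U n) (A ∩ D n) := by
    intro W hW A hA hAW
    have hterm : ∀ n, μ W (A ∩ D n) = μ (U n) (A ∩ D n) := by
      intro n
      set S := W ∩ U n with hS
      have hmeas1 : MeasurableSet[σ' S] (A ∩ S) :=
        auxInter {V | V ∈ 𝒞 ∧ V ⊆ W} (σ' S) S
          (hmem S S (hpi W hW _ (hUmem n)) subset_rfl)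
          (fun V hV => hmem S _ (hpi V hV.1 _ (hpi W hW _ (hUmem n)))
            Set.inter_subset_right) A hA
      have hmeas2 : MeasurableSet[σ' S] (D n ∩ S) :=
        auxInter {V | V ∈ 𝒞 ∧ V ⊆ U n} (σ' S) S
          (hmem S S (hpi W hW _ (hUmem n)) subset_rfl)
          (fun V hV => hmem S _ (hpi V hV.1 _ (hpi W hW _ (hUmem n)))
            Set.inter_subset_right) (D n) (hDm n)
      have hsplit : A ∩ D n = (A ∩ S) ∩ (D n ∩ S) := by
        ext x
        constructor
        · intro h
          exact ⟨⟨h.1, hAW h.1, hDsub n h.2⟩, h.2, hAW h.1, hDsub n h.2⟩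
        · intro h
          exact ⟨h.1.1, h.2.1⟩
      have hmeas : MeasurableSet[σ' S] (A ∩ D n) := by
        rw [hsplit]; exact hmeas1.inter hmeas2
      have hsub : A ∩ D n ⊆ S := fun x hx => ⟨hAW hx.1, hDsub n hx.2⟩
      exact L W hW (U n) (hUmem n) (A ∩ D n) hmeas hsub
    have hmeasW : ∀ n, MeasurableSet[σ' W] (A ∩ D n) := by
      intro n
      have hDW : MeasurableSet[σ' W] (D n ∩ W) :=
        auxInter {V | V ∈ 𝒞 ∧ V ⊆ U n} (σ' W) W
          (hmem W W hW subset_rfl)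
          (fun V hV => hmem W _ (hpi V hV.1 W hW) Set.inter_subset_right)
          (D n) (hDm n)
      have : A ∩ D n = A ∩ (D n ∩ W) := by
        ext x
        exact ⟨fun h => ⟨h.1, h.2, hAW h.1⟩, fun h => ⟨h.1, h.2.1⟩⟩
      rw [this]
      exact hA.inter hDW
    have hAeq : A = ⋃ n, A ∩ D n := by
      rw [← Set.inter_iUnion, hDuniv, Set.inter_univ]
    calc μ W A = μ W (⋃ n, A ∩ D n) := by rw [← hAeq]
      _ = ∑' n, μ W (A ∩ D n) :=
        measure_iUnion (hDdisj.mono fun i j h =>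
          h.mono Set.inter_subset_right Set.inter_subset_right) hmeasW
      _ = ∑' n, μ (U n) (A ∩ D n) := by
        exact tsum_congr fun n => hterm n
  -- construct the glued measure
  set ν : @Measure X σ0 := @Measure.ofMeasurable X σ0
    (fun A _ => ∑' n, μ (U n) (A ∩ D n))
    (by simp)
    (by
      intro f hf hdisj
      have hstep : ∀ n, μ (U n) ((⋃ i, f i) ∩ D n) = ∑' i, μ (U n) (f i ∩ D n) := by
        intro n
        rw [Set.iUnion_inter]
        exact measure_iUnion (hdisj.mono fun i j h =>
          h.mono Set.inter_subset_left Set.inter_subset_left)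
          (fun i => hmA (f i) (hf i) n)
      simp only [hstep]
      exact ENNReal.tsum_comm) with hν
  have hνapp : ∀ A : Set X, MeasurableSet[σ0] A →
      ν A = ∑' n, μ (U n) (A ∩ D n) := by
    intro A hA
    exact Measure.ofMeasurable_apply A hA
  have hprop : ∀ W ∈ 𝒞, ∀ A : Set X, MeasurableSet[σ' W] A → A ⊆ W →
      ν A = μ W A := by
    intro W hW A hA hAW
    rw [hνapp A (hσle W A hA), hsum W hW A hA hAW]
  have hsf : @SigmaFinite X σ0 ν := by
    refine ⟨⟨⟨fun n => U n, fun _ => Set.mem_univ _, ?_, hUcov⟩⟩⟩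
    intro n
    rw [hprop (U n) (hUmem n) (U n) (hmem (U n) (U n) (hUmem n) subset_rfl) subset_rfl]
    exact lt_of_le_of_lt (measure_mono (Set.subset_univ _))
      (lt_top_iff_ne_top.2 (hfin (U n) (hUmem n)))
  refine ⟨ν, ⟨hsf, hprop⟩, ?_⟩
  rintro ν' ⟨-, hp'⟩
  refine @Measure.ext X σ0 ν' ν ?_
  intro A hA
  have hAeq : A = ⋃ n, A ∩ D n := by
    rw [← Set.inter_iUnion, hDuniv, Set.inter_univ]
  have hmeas0 : ∀ n, MeasurableSet[σ0] (A ∩ D n) :=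
    fun n => hA.inter (hσle (U n) _ (hDm n))
  calc ν' A = ν' (⋃ n, A ∩ D n) := by rw [← hAeq]
    _ = ∑' n, ν' (A ∩ D n) :=
      measure_iUnion (hDdisj.mono fun i j h =>
        h.mono Set.inter_subset_right Set.inter_subset_right) hmeas0
    _ = ∑' n, μ (U n) (A ∩ D n) := tsum_congr fun n =>
        hp' (U n) (hUmem n) (A ∩ D n) (hmA A hA n)
          (fun x hx => hDsub n hx.2)
    _ = ν A := (hνapp A hA).symm
end

section
/- Let X be a set and let 𝒞 be a collection of subsets of X closed under pairwise intersection, let σ denote the σ-algebra on X generated by 𝒞, and for U ∈ 𝒞 let σ_U denote the σ-algebra on X generated by {V ∈ 𝒞 : V ⊆ U}. Let (U_n)_{n≥1} be a sequence of members of 𝒞 with ⋃_n U_n = X, and define 𝒱_1 = U_1 and 𝒱_n = U_n ∖ (U_1 ∪ ⋯ ∪ U_{n−1}) for n > 1. Then: (a) for each n, 𝒱_n ∈ σ_{U_n}; and (b) a set A ⊆ X belongs to σ if and only if A = ⋃_n B_n for some sets B_n ∈ σ_{U_n} with B_n ⊆ 𝒱_n; in that case necessarily B_n = A ∩ 𝒱_n.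 -/
open MeasureTheory
/-- Structural decomposition of the σ-algebra generated by a π-system along the
partition induced by a countable cover. -/
theorem stmt_1 {X : Type*} (𝒞 : Set (Set X))
    (hpi : ∀ U ∈ 𝒞, ∀ V ∈ 𝒞, U ∩ V ∈ 𝒞)
    (U : ℕ → Set X) (hUmem : ∀ n, U n ∈ 𝒞) (hUcov : (⋃ n, U n) = Set.univ)
    (V : ℕ → Set X) (hV : ∀ n, V n = U n \ ⋃ m < n, U m) :
    (∀ n, MeasurableSet[MeasurableSpace.generateFrom {W | W ∈ 𝒞 ∧ W ⊆ U n}] (V n)) ∧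
    (∀ A : Set X, MeasurableSet[MeasurableSpace.generateFrom 𝒞] A ↔
      ∃ B : ℕ → Set X,
        (∀ n, MeasurableSet[MeasurableSpace.generateFrom {W | W ∈ 𝒞 ∧ W ⊆ U n}] (B n) ∧
          B n ⊆ V n) ∧ A = ⋃ n, B n) ∧
    (∀ (A : Set X) (B : ℕ → Set X), (∀ n, B n ⊆ V n) → A = ⋃ n, B n →
      ∀ n, B n = A ∩ V n) := by
  classical
  set σn : ℕ → MeasurableSpace X :=
    fun n => MeasurableSpace.generateFrom {W | W ∈ 𝒞 ∧ W ⊆ U n} with hσn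
  have hUn : ∀ n, MeasurableSet[σn n] (U n) := fun n =>
    MeasurableSpace.measurableSet_generateFrom ⟨hUmem n, subset_rfl⟩
  have htrace : ∀ n (A : Set X), MeasurableSet[MeasurableSpace.generateFrom 𝒞] A →
      MeasurableSet[σn n] (A ∩ U n) := by
    intro n A hA
    induction hA with
    | basic s hs =>
        exact MeasurableSpace.measurableSet_generateFrom
          ⟨hpi s hs _ (hUmem n), Set.inter_subset_right⟩
    | empty => simp only [Set.empty_inter]; exact @MeasurableSet.empty X (σn n)
    | compl s hs ih =>
        have h : sᶜ ∩ U n = U n \ (s ∩ U n) := by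
          ext x; simp [Set.mem_diff]; tauto
        rw [h]; exact (hUn n).diff ih
    | iUnion f hf ih =>
        rw [Set.iUnion_inter]; exact MeasurableSet.iUnion ih
  have hVn : ∀ n, MeasurableSet[σn n] (V n) := by
    intro n
    rw [hV n]
    have h : U n \ ⋃ m < n, U m = U n \ ⋃ m < n, (U m ∩ U n) := by
      ext x; simp; tauto
    rw [h]
    refine (hUn n).diff ?_
    exact MeasurableSet.biUnion (Set.to_countable _) fun m _ =>
      MeasurableSpace.measurableSet_generateFrom
        ⟨hpi _ (hUmem m) _ (hUmem n), Set.inter_subset_right⟩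
  have hVsub : ∀ n, V n ⊆ U n := fun n => by rw [hV n]; exact Set.diff_subset
  have hVdisj : ∀ m n, m ≠ n → Disjoint (V m) (V n) := by
    have key : ∀ m n, m < n → Disjoint (V m) (V n) := by
      intro m n h
      rw [Set.disjoint_left]
      intro x hxm hxn
      rw [hV n] at hxn
      exact hxn.2 (Set.mem_biUnion h (hVsub m hxm))
    intro m n hmn
    rcases lt_or_gt_of_ne hmn with h | h
    · exact key m n h
    · exact (key n m h).symm
  have hVcov : (⋃ n, V n) = Set.univ := by
    apply Set.eq_univ_of_forall
    intro x
    have hex : ∃ n, x ∈ U n := by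
      have := hUcov ▸ Set.mem_univ x
      simpa using Set.eq_univ_iff_forall.mp hUcov x
    refine Set.mem_iUnion.2 ⟨Nat.find hex, ?_⟩
    rw [hV (Nat.find hex)]
    refine ⟨Nat.find_spec hex, ?_⟩
    simp only [Set.mem_iUnion, not_exists]
    intro m hm
    exact Nat.find_min hex hm
  have hle : ∀ n, σn n ≤ MeasurableSpace.generateFrom 𝒞 := by
    intro n
    refine MeasurableSpace.generateFrom_le fun W hW => ?_
    exact MeasurableSpace.measurableSet_generateFrom hW.1
  have part_c : ∀ (A : Set X) (B : ℕ → Set X), (∀ n, B n ⊆ V n) → A = ⋃ n, B n →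
      ∀ n, B n = A ∩ V n := by
    intro A B hB hA n
    apply Set.Subset.antisymm
    · intro x hx
      exact ⟨hA ▸ Set.mem_iUnion.2 ⟨n, hx⟩, hB n hx⟩
    · rintro x ⟨hxA, hxV⟩
      rw [hA] at hxA
      obtain ⟨m, hm⟩ := Set.mem_iUnion.mp hxA
      rcases eq_or_ne m n with rfl | hne
      · exact hm
      · exact absurd rfl ((hVdisj m n hne).ne_of_mem (hB m hm) hxV)
  refine ⟨hVn, fun A => ⟨fun hA => ?_, ?_⟩, part_c⟩
  · refine ⟨fun n => A ∩ V n, fun n => ⟨?_, Set.inter_subset_right⟩, ?_⟩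
    · show MeasurableSet[σn n] (A ∩ V n)
      have h : A ∩ V n = (A ∩ U n) ∩ V n := by
        rw [Set.inter_assoc, Set.inter_eq_self_of_subset_right (hVsub n)]
      rw [h]
      exact (htrace n A hA).inter (hVn n)
    · rw [← Set.inter_iUnion, hVcov, Set.inter_univ]
  · rintro ⟨B, hB, rfl⟩
    exact MeasurableSet.iUnion fun n => hle n _ (hB n).1
end

section
/- For every real number q with 0 ≤ q < 1, the infinite product ∏_{n=1}^∞ (1 − q^n)^3 equals the convergent series ∑_{n=0}^∞ (−1)^n (2n+1) q^{n(n+1)/2}. -/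
open Finset Filter Topology

namespace Jacobi3

noncomputable def P (q : ℝ) (k : ℕ) : ℝ := ∏ i ∈ Finset.range k, (1 - q^(i+1))

noncomputable def Bb (q : ℝ) (m j : ℕ) : ℝ := if j ≤ m then P q m / (P q j * P q (m-j)) else 0

variable {q : ℝ} (hq0 : 0 < q) (hq1 : q < 1)

include hq0 hq1 in
lemma factor_pos (i : ℕ) : 0 < 1 - q ^ (i+1) := by
  have : q ^ (i+1) < 1 := pow_lt_one₀ (le_of_lt hq0) hq1 (Nat.succ_ne_zero i)
  linarith

include hq0 hq1 in
lemma P_pos (k : ℕ) : 0 < P q k :=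
  Finset.prod_pos fun i _ => factor_pos hq0 hq1 i

include hq0 hq1 in
lemma P_le_one (k : ℕ) : P q k ≤ 1 := by
  apply Finset.prod_le_one
  · intro i _; exact le_of_lt (factor_pos hq0 hq1 i)
  · intro i _
    have : 0 < q ^ (i+1) := pow_pos hq0 _
    linarith

include hq0 hq1 in
lemma P_anti : Antitone (P q) := by
  apply antitone_nat_of_succ_le
  intro n
  rw [P, Finset.prod_range_succ, ← P]
  have h1 := P_pos hq0 hq1 n
  have h2 : 1 - q ^ (n+1) ≤ 1 := by have : 0 < q ^ (n+1) := pow_pos hq0 _; linarith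
  nlinarith [factor_pos hq0 hq1 n]

include hq0 hq1 in
lemma P_ge_c (k : ℕ) : Real.exp (-(q / (1-q)^2)) ≤ P q k := by
  have hq1' : 0 < 1 - q := by linarith
  have step : ∀ i : ℕ, Real.exp (-(q^(i+1) / (1-q))) ≤ 1 - q^(i+1) := by
    intro i
    have hx : q ^ (i+1) ≤ q := by
      calc q ^ (i+1) ≤ q ^ 1 := pow_le_pow_of_le_one (le_of_lt hq0) (le_of_lt hq1) (by omega)
        _ = q := pow_one q
    have hxpos : 0 < q ^ (i+1) := pow_pos hq0 _
    have h1 : (1 : ℝ) + q^(i+1)/(1-q) ≤ Real.exp (q^(i+1)/(1-q)) := by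
      have := Real.add_one_le_exp (q^(i+1)/(1-q)); linarith
    have h2 : (1 : ℝ) ≤ (1 + q^(i+1)/(1-q)) * (1 - q^(i+1)) := by
      have e : (1 + q^(i+1)/(1-q)) * (1 - q^(i+1))
          = 1 + q^(i+1) * ((1 - q^(i+1)) - (1-q)) / (1-q) := by field_simp; ring
      rw [e]
      have : (0:ℝ) ≤ q^(i+1) * ((1 - q^(i+1)) - (1-q)) / (1-q) := by
        apply div_nonneg _ (le_of_lt hq1')
        apply mul_nonneg (le_of_lt hxpos)
        linarith
      linarith
    have h3 : (1:ℝ) ≤ Real.exp (q^(i+1)/(1-q)) * (1 - q^(i+1)) := by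
      nlinarith [factor_pos hq0 hq1 i, Real.exp_pos (q^(i+1)/(1-q))]
    rw [Real.exp_neg]
    rw [inv_le_iff_one_le_mul₀ (Real.exp_pos _)] at *
    linarith [h3]
  calc Real.exp (-(q/(1-q)^2)) ≤ Real.exp (-(∑ i ∈ range k, q^(i+1)/(1-q))) := by
        apply Real.exp_le_exp.2
        have : ∑ i ∈ range k, q^(i+1)/(1-q) ≤ q/(1-q)^2 := by
          rw [← Finset.sum_div]
          rw [div_le_div_iff₀ hq1' (by positivity)]
          have hgeom : ∑ i ∈ range k, q^(i+1) ≤ q / (1-q) := by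
            have e : ∑ i ∈ range k, q^(i+1) = q * ((q^k - 1)/(q-1)) := by
              rw [← geom_sum_eq (by intro h; rw [h] at hq1; linarith) k, Finset.mul_sum]
              exact Finset.sum_congr rfl fun i _ => by ring
            rw [e]
            have hk : 0 ≤ 1 - q^k := by
              have : q ^ k ≤ 1 := pow_le_one₀ (le_of_lt hq0) (le_of_lt hq1)
              linarith
            have e2 : (q^k - 1)/(q-1) = (1 - q^k)/(1-q) := by
              rw [div_eq_div_iff (by linarith) (by linarith)]; ring
            rw [e2]
            rw [show q * ((1 - q ^ k) / (1 - q)) = q*(1-q^k)/(1-q) by ring,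
              div_le_div_iff₀ (by linarith) (by linarith : (0:ℝ) < 1 - q)]
            nlinarith [mul_nonneg (mul_nonneg hq0.le (pow_pos hq0 k).le) hq1'.le]
          calc (∑ i ∈ range k, q^(i+1)) * (1-q)^2 ≤ (q/(1-q)) * (1-q)^2 := by
                apply mul_le_mul_of_nonneg_right hgeom (by positivity)
            _ = q * (1-q) := by field_simp
        linarith
    _ ≤ P q k := by
        have e : Real.exp (-∑ i ∈ range k, q ^ (i + 1) / (1 - q))
            = ∏ i ∈ range k, Real.exp (-(q^(i+1)/(1-q))) := by
          rw [← Real.exp_sum]; congr 1; rw [← Finset.sum_neg_distrib]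
        rw [e]
        apply Finset.prod_le_prod
        · intro i _; positivity
        · intro i _; simpa using step i


-- arithmetic helpers
lemma two_dvd_tri (j : ℕ) : 2 ∣ j*(j-1) := by
  rcases j with _ | i
  · simp
  · rcases Nat.even_mul_succ_self i with ⟨t, ht⟩
    have h : (i+1)*(i+1-1) = t + t := by
      simpa [Nat.mul_comm] using ht
    rw [h]; omega

lemma tri_succ (j : ℕ) : (j+1)*((j+1)-1)/2 = j*(j-1)/2 + j := by
  have keyeq : (j+1)*j = j*(j-1) + 2*j := by
    rcases j with _ | i
    · simp
    · simp only [Nat.succ_sub_one]; ring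
  obtain ⟨a, b, ha, hb, h1, h2⟩ :
      ∃ a b, j*(j-1) = a ∧ (j+1)*j = b ∧ 2 ∣ a ∧ 2 ∣ b :=
    ⟨_, _, rfl, rfl, two_dvd_tri j, by simpa using two_dvd_tri (j+1)⟩
  rw [ha] at keyeq
  simp only [Nat.add_sub_cancel]
  rw [hb, ha]
  omega

noncomputable def C (q : ℝ) (m j : ℕ) : ℝ := q ^ (j*(j-1)/2) * Bb q m j

lemma P_succ (q : ℝ) (k : ℕ) : P q (k+1) = P q k * (1 - q^(k+1)) := by
  rw [P, P, Finset.prod_range_succ]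

lemma P_zero (q : ℝ) : P q 0 = 1 := by simp [P]

include hq0 hq1 in
lemma Bb_pascal (m j : ℕ) :
    Bb q (m+1) (j+1) = Bb q m (j+1) + q^(m-j) * Bb q m j := by
  have hP := P_pos hq0 hq1
  rcases lt_trichotomy j m with h | h | h
  · -- j < m
    obtain ⟨d, rfl⟩ : ∃ d, m = j + d + 1 := ⟨m - j - 1, by omega⟩
    rw [Bb, Bb, Bb, if_pos (by omega), if_pos (by omega), if_pos (by omega)]
    have e1 : j + d + 1 + 1 - (j+1) = d+1 := by omega
    have e2 : j + d + 1 - (j+1) = d := by omega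
    have e3 : j + d + 1 - j = d + 1 := by omega
    rw [e1, e2, e3]
    have key : (1 - q^(j+d+1+1)) = (1 - q^(d+1)) + q^(d+1) * (1 - q^(j+1)) := by
      have hpp : q^(d+1) * q^(j+1) = q^(j+d+1+1) := by rw [← pow_add]; congr 1; omega
      rw [← hpp]; ring
    rw [P_succ q (j+d+1), P_succ q d, P_succ q j, key]
    have h1 := (hP j).ne'
    have h2 := (hP d).ne'
    have h3 := (hP (j+d+1)).ne'
    have h4 := (factor_pos hq0 hq1 d).ne'
    have h5 := (factor_pos hq0 hq1 j).ne'
    field_simp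
  · -- j = m
    subst h
    rw [Bb, Bb, Bb, if_pos (by omega), if_neg (by omega), if_pos (by omega)]
    simp only [Nat.sub_self, Nat.add_sub_cancel, pow_zero, P_zero, mul_one]
    rw [div_self (hP (j+1)).ne', div_self (hP j).ne']
    ring

  · rw [Bb, Bb, Bb, if_neg (by omega), if_neg (by omega), if_neg (by omega)]
    have : m - j = 0 := by omega
    simp [this]

include hq0 hq1 in
lemma C_succ (m j : ℕ) : C q (m+1) (j+1) = C q m (j+1) + q^m * C q m j := by
  rcases le_or_gt j m with h | h
  · rw [C, C, C, Bb_pascal hq0 hq1, mul_add]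
    congr 1
    rw [← mul_assoc, ← mul_assoc, ← pow_add, ← pow_add]
    congr 2
    rw [tri_succ]
    omega
  · rw [C, C, C, Bb, Bb, Bb, if_neg (by omega), if_neg (by omega), if_neg (by omega)]
    ring

include hq0 hq1 in
lemma C_zero (m : ℕ) : C q m 0 = 1 := by
  rw [C, Bb, if_pos (by omega), Nat.sub_zero, P_zero]
  rw [one_mul, div_self (P_pos hq0 hq1 m).ne']
  norm_num

lemma C_top {q : ℝ} (m : ℕ) : C q m (m+1) = 0 := by
  rw [C, Bb, if_neg (by omega)]; ring

include hq0 hq1 in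
lemma gauss (m : ℕ) (z : ℝ) :
    ∏ k ∈ range m, (1 + z * q^k) = ∑ j ∈ range (m+1), C q m j * z^j := by
  induction m with
  | zero => simp [C_zero hq0 hq1]
  | succ m ih =>
    rw [Finset.prod_range_succ, ih]
    rw [Finset.sum_range_succ' (fun j => C q (m+1) j * z^j) (m+1)]
    have e1 : ∀ j ∈ range (m+1), C q (m+1) (j+1) * z^(j+1)
        = C q m (j+1) * z^(j+1) + (q^m * z) * (C q m j * z^j) := by
      intro j _
      rw [C_succ hq0 hq1]; ring
    rw [Finset.sum_congr rfl e1, Finset.sum_add_distrib, C_zero hq0 hq1, ← Finset.mul_sum]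
    have eA : (∑ x ∈ range (m+1), C q m (x+1) * z^(x+1)) + 1 * z^0
        = ∑ j ∈ range (m+1), C q m j * z^j := by
      have h2 : ∑ j ∈ range (m+2), C q m j * z^j
          = (∑ j ∈ range (m+1), C q m (j+1) * z^(j+1)) + C q m 0 * z^0 :=
        Finset.sum_range_succ' _ _
      have h3 : ∑ j ∈ range (m+2), C q m j * z^j = ∑ j ∈ range (m+1), C q m j * z^j := by
        rw [Finset.sum_range_succ, C_top]; ring
      rw [C_zero hq0 hq1] at h2
      rw [← h3, h2]
    set S := ∑ j ∈ range (m+1), C q m j * z^j with hS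
    set A := ∑ x ∈ range (m+1), C q m (x+1) * z^(x+1) with hA
    have : S * (1 + z * q^m) = (A + q^m * z * S) + 1 * z^0 := by
      rw [show A + q^m*z*S + 1*z^0 = (A + 1*z^0) + q^m*z*S by ring, eA]
      ring
    rw [this]

noncomputable def Aa (q : ℝ) (n j : ℕ) : ℝ := (-1)^j * C q (2*n) j / q^((n-1)*j)

noncomputable def W (q : ℝ) (n r : ℕ) : ℝ :=
  (-1)^(r+1) * r * Bb q (2*n) (n+r) * q^(r*(r-1)/2) * (1 - q^r)

-- ℕ exponent identities
lemma exp_plus (n i : ℕ) (hn : 1 ≤ n) :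
    n*(n-1)/2 + (n+i)*((n+i)-1)/2 = (n-1)*(n+i) + i*(i+1)/2 := by
  obtain ⟨m, rfl⟩ : ∃ m, n = m+1 := ⟨n-1, by omega⟩
  simp only [Nat.add_sub_cancel, show m+1+i-1 = m+i by omega, show m+1-1 = m by omega]
  have h1 := Nat.div_mul_cancel (two_dvd_tri (m+1))
  have h2 := Nat.div_mul_cancel (two_dvd_tri (m+1+i))
  have h3 := Nat.div_mul_cancel (two_dvd_tri (i+1))
  simp only [Nat.add_sub_cancel] at h1 h2 h3
  have key : (m+1)*m + (m+1+i)*(m+i) = 2*(m*(m+1+i)) + (i+1)*i := by ring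
  rw [show i*(i+1) = (i+1)*i by ring]
  generalize (m+1)*m = a at h1 key
  generalize (m+1+i)*(m+i) = b at h2 key
  generalize (i+1)*i = c at h3 key
  generalize m*(m+1+i) = d at key
  omega

lemma exp_minus (r s : ℕ) (hr : 1 ≤ r) :
    (r+s)*((r+s)-1)/2 + s*(s-1)/2 = ((r+s)-1)*s + r*(r-1)/2 := by
  obtain ⟨t, rfl⟩ : ∃ t, r = t+1 := ⟨r-1, by omega⟩
  simp only [show t+1+s-1 = t+s by omega, Nat.add_sub_cancel]
  have h1 := Nat.div_mul_cancel (two_dvd_tri (t+1+s))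
  have h2 := Nat.div_mul_cancel (two_dvd_tri s)
  have h3 := Nat.div_mul_cancel (two_dvd_tri (t+1))
  simp only [Nat.add_sub_cancel] at h1 h3
  have key : (t+1+s)*(t+s) + s*(s-1) = 2*((t+s)*s) + (t+1)*t := by
    rcases s with _ | u
    · simp
    · simp only [Nat.add_sub_cancel]; ring
  generalize (t+1+s)*(t+s) = a at h1 key
  generalize s*(s-1) = b at h2 key
  generalize (t+1)*t = c at h3 key
  generalize (t+s)*s = d at key
  omega

include hq0 hq1 in
lemma Bb_symm (n r : ℕ) (hr : r ≤ n) : Bb q (2*n) (n-r) = Bb q (2*n) (n+r) := by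
  rw [Bb, Bb, if_pos (by omega), if_pos (by omega),
    show 2*n - (n-r) = n+r by omega, show 2*n - (n+r) = n-r by omega,
    mul_comm (P q (n-r)) (P q (n+r))]

include hq0 hq1 in
lemma Splus (n i : ℕ) (hn : 1 ≤ n) :
    (-1)^n * q^(n*(n-1)/2) * Aa q n (n+i)
      = (-1)^i * Bb q (2*n) (n+i) * q^(i*(i+1)/2) := by
  rw [Aa, C]
  have hsgn : ((-1:ℝ))^n * (-1)^(n+i) = (-1)^i := by
    rw [← pow_add, show n+(n+i) = 2*n + i by ring, pow_add, pow_mul]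
    norm_num
  have hqe : q^(n*(n-1)/2) * q^((n+i)*((n+i)-1)/2)
      = q^((n-1)*(n+i)) * q^(i*(i+1)/2) := by
    rw [← pow_add, ← pow_add, exp_plus n i hn]
  have hne : (q:ℝ)^((n-1)*(n+i)) ≠ 0 := by positivity
  field_simp
  calc (-1:ℝ)^n * q^(n*(n-1)/2) * (-1)^(n+i) * q^((n+i)*((n+i)-1)/2) * Bb q (2*n) (n+i)
      = ((-1:ℝ)^n * (-1)^(n+i)) * (q^(n*(n-1)/2) * q^((n+i)*((n+i)-1)/2)) * Bb q (2*n) (n+i) := by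
        ring
    _ = Bb q (2*n) (n+i) * q^((n-1)*(n+i)) * (-1)^i * q^(i*(i+1)/2) := by
        rw [hsgn, hqe]; ring

include hq0 hq1 in
lemma Sminus (n r : ℕ) (hn : 1 ≤ n) (hr1 : 1 ≤ r) (hrn : r ≤ n) :
    (-1)^n * q^(n*(n-1)/2) * Aa q n (n-r)
      = (-1)^r * Bb q (2*n) (n+r) * q^(r*(r-1)/2) := by
  rw [Aa, C, ← Bb_symm hq0 hq1 n r hrn]
  obtain ⟨s, rfl⟩ : ∃ s, n = r + s := ⟨n - r, by omega⟩
  have e1 : r + s - r = s := by omega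
  rw [e1]
  have hsgn : ((-1:ℝ))^(r+s) * (-1)^s = (-1)^r := by
    rw [← pow_add, show (r+s)+s = 2*s + r by ring, pow_add, pow_mul]
    norm_num
  have hqe : q^((r+s)*((r+s)-1)/2) * q^(s*(s-1)/2)
      = q^(((r+s)-1)*s) * q^(r*(r-1)/2) := by
    rw [← pow_add, ← pow_add, exp_minus r s hr1]
  have hne : (q:ℝ)^(((r+s)-1)*s) ≠ 0 := by positivity
  field_simp
  calc (-1:ℝ)^(r+s) * q^((r+s)*((r+s)-1)/2) * (-1)^s * q^(s*(s-1)/2) * Bb q (2*(r+s)) s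
      = ((-1:ℝ)^(r+s) * (-1)^s) * (q^((r+s)*((r+s)-1)/2) * q^(s*(s-1)/2)) * Bb q (2*(r+s)) s := by
        ring
    _ = Bb q (2*(r+s)) s * q^((r+s-1)*s) * (-1)^r * q^(r*(r-1)/2) := by
        rw [hsgn, hqe]; ring

include hq0 hq1 in
lemma expand (n : ℕ) (y : ℝ) :
    ∏ k ∈ range (2*n), (1 - y * q^k / q^(n-1))
      = ∑ j ∈ range (2*n+1), Aa q n j * y^j := by
  have h := gauss hq0 hq1 (2*n) (-(y / q^(n-1)))
  have hL : ∀ k ∈ range (2*n), 1 + (-(y / q^(n-1))) * q^k = 1 - y * q^k / q^(n-1) := by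
    intro k _; ring
  rw [Finset.prod_congr rfl hL] at h
  rw [h]
  apply Finset.sum_congr rfl
  intro j _
  have h2 : (-(y / q^(n-1)))^j = (-1)^j * (y^j / q^((n-1)*j)) := by
    rw [show -(y / q^(n-1)) = (-1) * (y / q^(n-1)) by ring, mul_pow, div_pow, ← pow_mul]
  rw [Aa, h2]
  ring

include hq0 hq1 in
lemma sumA_zero (n : ℕ) (hn : 1 ≤ n) : ∑ j ∈ range (2*n+1), Aa q n j = 0 := by
  have h := expand hq0 hq1 n 1
  simp only [one_pow, mul_one] at h
  rw [← h]
  apply Finset.prod_eq_zero (i := n-1) (by simp; omega)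
  have : (q:ℝ)^(n-1) ≠ 0 := by positivity
  field_simp
  norm_num


lemma exp_half (m : ℕ) : m*(m-1)/2 + (m+1)*m/2 = m*m := by
  have h1 := Nat.div_mul_cancel (two_dvd_tri m)
  have h2 := Nat.div_mul_cancel (two_dvd_tri (m+1))
  simp only [Nat.add_sub_cancel] at h2
  have key : m*(m-1) + (m+1)*m = 2*(m*m) := by
    rcases m with _ | t
    · simp
    · simp only [Nat.add_sub_cancel]; ring
  generalize m*(m-1) = a at h1 key
  generalize (m+1)*m = b at h2 key
  generalize m*m = c at key ⊢
  omega

include hq0 hq1 in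
lemma R_one (n : ℕ) (hn : 1 ≤ n) :
    ∏ k ∈ (range (2*n)).erase (n-1), (1 - 1 * q^k / q^(n-1))
      = (-1:ℝ)^(n-1) * (P q n * P q (n-1)) / q^(n*(n-1)/2) := by
  obtain ⟨m, rfl⟩ : ∃ m, n = m+1 := ⟨n-1, by omega⟩
  simp only [Nat.add_sub_cancel]
  have hset : (range (2*(m+1))).erase m = range m ∪ Finset.Ico (m+1) (2*(m+1)) := by
    ext k
    simp only [Finset.mem_erase, Finset.mem_range, Finset.mem_union, Finset.mem_Ico]
    omega
  have hdisj : Disjoint (range m) (Finset.Ico (m+1) (2*(m+1))) := by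
    rw [Finset.disjoint_left]
    intro k hk hk2
    simp only [Finset.mem_range] at hk
    simp only [Finset.mem_Ico] at hk2
    omega
  rw [hset, Finset.prod_union hdisj]
  have part2 : ∏ k ∈ Finset.Ico (m+1) (2*(m+1)), (1 - 1 * q^k / q^m) = P q (m+1) := by
    rw [Finset.prod_Ico_eq_prod_range, show 2*(m+1) - (m+1) = m+1 by omega, P]
    apply Finset.prod_congr rfl
    intro i _
    rw [one_mul, show m+1+i = (i+1) + m by omega, pow_add, mul_div_assoc,
      div_self (by positivity : (q:ℝ)^m ≠ 0), mul_one]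
  have part1 : ∏ k ∈ range m, (1 - 1 * q^k / q^m)
      = (-1:ℝ)^m * P q m / q^((m+1)*m/2) := by
    have hstep : ∀ k ∈ range m, (1 - 1 * q^k / q^m)
        = (-1) * ((1 - q^(m-k)) * q^k) / q^m := by
      intro k hk
      rw [Finset.mem_range] at hk
      have hpp : q^k * q^(m-k) = q^m := by rw [← pow_add]; congr 1; omega
      have hqm : (q:ℝ)^m ≠ 0 := by positivity
      calc 1 - 1 * q^k/q^m = (q^m - q^k)/q^m := by field_simp
        _ = (q^k * q^(m-k) - q^k)/q^m := by rw [hpp]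
        _ = (-1) * ((1 - q^(m-k)) * q^k) / q^m := by ring
    rw [Finset.prod_congr rfl hstep, Finset.prod_div_distrib, Finset.prod_mul_distrib,
      Finset.prod_mul_distrib, Finset.prod_const, Finset.prod_const, Finset.card_range,
      Finset.prod_pow_eq_pow_sum]
    have hrefl : ∏ k ∈ range m, (1 - q^(m-k)) = P q m := by
      rw [P, ← Finset.prod_range_reflect]
      apply Finset.prod_congr rfl
      intro i hi
      rw [Finset.mem_range] at hi
      rw [show m - (m-1-i) = i+1 from by omega]
    rw [hrefl, Finset.sum_range_id]
    have hqid : (q:ℝ)^(m*(m-1)/2) / (q^m)^m = 1 / q^((m+1)*m/2) := by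
      rw [← pow_mul, div_eq_div_iff (by positivity) (by positivity), one_mul,
        ← pow_add, exp_half m]
    calc (-1:ℝ)^m * (P q m * q^(m*(m-1)/2)) / (q^m)^m
        = ((-1:ℝ)^m * P q m) * (q^(m*(m-1)/2) / (q^m)^m) := by ring
      _ = ((-1:ℝ)^m * P q m) * (1 / q^((m+1)*m/2)) := by rw [hqid]
      _ = (-1:ℝ)^m * P q m / q^((m+1)*m/2) := by ring
  rw [part1, part2]
  ring

include hq0 hq1 in
lemma eq4 (n : ℕ) (hn : 1 ≤ n) :
    P q n * P q (n-1)
      = ∑ j ∈ range (2*n+1), ((-1:ℝ)^n * q^(n*(n-1)/2)) * ((j:ℝ) * Aa q n j) := by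
  classical
  set S : ℝ → ℝ := fun y => ∑ j ∈ range (2*n+1), Aa q n j * ∑ t ∈ range j, y^t with hSdef
  set R : ℝ → ℝ := fun y => ∏ k ∈ (range (2*n)).erase (n-1), (1 - y * q^k / q^(n-1))
    with hRdef
  have hmem : n - 1 ∈ range (2*n) := by simp; omega
  -- for all y : (1-y) * R y = (y-1) * S y
  have hkey : ∀ y : ℝ, (1 - y) * R y = (y - 1) * S y := by
    intro y
    have hLHS : (1 - y * q^(n-1) / q^(n-1)) * R y
        = ∑ j ∈ range (2*n+1), Aa q n j * y^j :=
      (Finset.mul_prod_erase (range (2*n)) (fun k => 1 - y * q^k / q^(n-1)) hmem).trans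
        (expand hq0 hq1 n y)
    have hfac : 1 - y * q^(n-1) / q^(n-1) = 1 - y := by
      rw [mul_div_assoc, div_self (by positivity : (q:ℝ)^(n-1) ≠ 0), mul_one]
    rw [hfac] at hLHS
    rw [hLHS]
    have : ∑ j ∈ range (2*n+1), Aa q n j * y^j
        = ∑ j ∈ range (2*n+1), Aa q n j * (y^j - 1)
          + ∑ j ∈ range (2*n+1), Aa q n j := by
      rw [← Finset.sum_add_distrib]
      exact Finset.sum_congr rfl fun j _ => by ring
    rw [this, sumA_zero hq0 hq1 n hn, add_zero, hSdef, Finset.mul_sum]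
    apply Finset.sum_congr rfl
    intro j _
    rw [← geom_sum_mul y j]
    ring
  -- continuity
  have hRc : Continuous R := by
    apply continuous_finset_prod
    intro k _
    fun_prop
  have hSc : Continuous S := by
    apply continuous_finset_sum
    intro j _
    apply Continuous.mul continuous_const
    apply continuous_finset_sum
    intro t _
    exact continuous_pow t
  -- R 1 = - S 1
  have hRS : R 1 + S 1 = 0 := by
    have h1 : Filter.Tendsto (fun y => R y + S y) (𝓝[>] (1:ℝ)) (𝓝 (R 1 + S 1)) :=
      ((hRc.add hSc).tendsto 1).mono_left nhdsWithin_le_nhds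
    have h2 : Filter.Tendsto (fun y => R y + S y) (𝓝[>] (1:ℝ)) (𝓝 0) := by
      apply Filter.Tendsto.congr' _ tendsto_const_nhds
      filter_upwards [self_mem_nhdsWithin] with y hy
      have hy1 : y ≠ 1 := ne_of_gt hy
      have := hkey y
      have hyy : (y - 1) ≠ 0 := sub_ne_zero.2 hy1
      have : (y-1) * (R y + S y) = 0 := by
        have h3 : (1-y) * R y = (y-1) * S y := hkey y
        ring_nf
        ring_nf at h3
        linarith
      rcases mul_eq_zero.1 this with h | h
      · exact absurd h hyy
      · exact h.symm
    exact tendsto_nhds_unique h1 h2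
  -- compute S 1
  have hS1 : S 1 = ∑ j ∈ range (2*n+1), (j:ℝ) * Aa q n j := by
    rw [hSdef]
    apply Finset.sum_congr rfl
    intro j _
    simp [Finset.sum_const]
    ring
  -- compute R 1
  have hR1 : R 1 = (-1:ℝ)^(n-1) * (P q n * P q (n-1)) / q^(n*(n-1)/2) :=
    R_one hq0 hq1 n hn
  -- combine
  have hfin : P q n * P q (n-1)
      = (-1:ℝ)^n * q^(n*(n-1)/2) * ∑ j ∈ range (2*n+1), (j:ℝ) * Aa q n j := by
    rw [← hS1]
    have hS1' : S 1 = - R 1 := by linarith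
    rw [hS1', hR1]
    have hqpow : (q:ℝ)^(n*(n-1)/2) ≠ 0 := by positivity
    obtain ⟨m, rfl⟩ : ∃ m, n = m+1 := ⟨n-1, by omega⟩
    simp only [Nat.add_sub_cancel, pow_succ]
    field_simp
    ring_nf
    all_goals first
      | (rw [show ((-1:ℝ))^(m*2) = 1 by rw [show m*2 = 2*m by ring, pow_mul, neg_one_sq, one_pow]]; ring)
      | exact (Nat.even_or_odd m).imp (fun h => h.neg_one_pow) (fun h => h.neg_one_pow)
      | ring
  rw [hfin, Finset.mul_sum]

include hq0 hq1 in
lemma finite_jacobi (n : ℕ) (hn : 1 ≤ n) :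
    P q n * P q (n-1) = ∑ r ∈ range (n+1), W q n r := by
  classical
  set Ez : ℕ → ℝ := fun i => (-1)^i * Bb q (2*n) (n+i) * q^(i*(i+1)/2) with hEz
  set Ez' : ℕ → ℝ := fun r => (-1)^r * Bb q (2*n) (n+r) * q^(r*(r-1)/2) with hEz'
  set K : ℝ := (-1)^n * q^(n*(n-1)/2) with hK
  -- split the zero identity
  have hsplitA : (0:ℝ) = (∑ i ∈ range (n+1), Ez i) + ∑ j ∈ range n, Ez' (j+1) := by
    have h0 : (0:ℝ) = ∑ j ∈ range (2*n+1), K * Aa q n j := by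
      rw [← Finset.mul_sum, sumA_zero hq0 hq1 n hn, mul_zero]
    rw [show 2*n+1 = n + (n+1) by omega, Finset.sum_range_add] at h0
    rw [h0, add_comm]
    congr 1
    · apply Finset.sum_congr rfl
      intro i _
      rw [hEz, hK]
      simp only
      exact Splus hq0 hq1 n i hn
    · -- ∑_{j<n} K * Aa j = ∑_j Ez' (j+1) via reflection
      rw [← Finset.sum_range_reflect (fun j => K * Aa q n j) n]
      apply Finset.sum_congr rfl
      intro j hj
      rw [Finset.mem_range] at hj
      rw [hEz', hK]
      simp only
      rw [show n - 1 - j = n - (j+1) from by omega]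
      exact Sminus hq0 hq1 n (j+1) hn (by omega) (by omega)
  -- split eq4
  have hsplit4 : P q n * P q (n-1)
      = (∑ i ∈ range (n+1), ((n:ℝ)+i) * Ez i)
        + ∑ j ∈ range n, ((n:ℝ)-((j:ℝ)+1)) * Ez' (j+1) := by
    have h4 := eq4 hq0 hq1 n hn
    rw [show 2*n+1 = n + (n+1) by omega, Finset.sum_range_add] at h4
    rw [h4, add_comm]
    congr 1
    · apply Finset.sum_congr rfl
      intro i _
      rw [hEz]
      simp only
      have hs := Splus hq0 hq1 n i hn
      calc (-1)^n * q^(n*(n-1)/2) * (((n+i : ℕ):ℝ) * Aa q n (n+i))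
          = ((n+i:ℕ):ℝ) * ((-1)^n * q^(n*(n-1)/2) * Aa q n (n+i)) := by ring
        _ = ((n:ℝ)+i) * ((-1)^i * Bb q (2*n) (n+i) * q^(i*(i+1)/2)) := by
            rw [hs]; push_cast; ring
    · rw [← Finset.sum_range_reflect (fun j => (-1)^n * q^(n*(n-1)/2) * ((j:ℝ) * Aa q n j)) n]
      apply Finset.sum_congr rfl
      intro j hj
      rw [Finset.mem_range] at hj
      rw [hEz']
      simp only
      rw [show n - 1 - j = n - (j+1) from by omega]
      have hs := Sminus hq0 hq1 n (j+1) hn (by omega) (by omega)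
      have hcast : ((n - (j+1) : ℕ) : ℝ) = (n:ℝ) - ((j:ℝ)+1) := by
        rw [Nat.cast_sub (by omega)]
        push_cast
        ring
      calc (-1)^n * q^(n*(n-1)/2) * (((n - (j+1) : ℕ) : ℝ) * Aa q n (n-(j+1)))
          = ((n - (j+1) : ℕ) : ℝ) * ((-1)^n * q^(n*(n-1)/2) * Aa q n (n-(j+1))) := by ring
        _ = ((n:ℝ)-((j:ℝ)+1)) * ((-1)^(j+1) * Bb q (2*n) (n+(j+1)) * q^((j+1)*((j+1)-1)/2)) := by
            rw [hs, hcast]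
  -- subtract n * hsplitA
  have main : P q n * P q (n-1)
      = (∑ i ∈ range (n+1), (i:ℝ) * Ez i)
        + ∑ j ∈ range n, (-((j:ℝ)+1)) * Ez' (j+1) := by
    have e1 : ∑ i ∈ range (n+1), ((n:ℝ)+i) * Ez i
        = (∑ i ∈ range (n+1), (i:ℝ) * Ez i) + (n:ℝ) * ∑ i ∈ range (n+1), Ez i := by
      rw [Finset.mul_sum, ← Finset.sum_add_distrib]
      exact Finset.sum_congr rfl fun i _ => by ring
    have e2 : ∑ j ∈ range n, ((n:ℝ)-((j:ℝ)+1)) * Ez' (j+1)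
        = (∑ j ∈ range n, (-((j:ℝ)+1)) * Ez' (j+1)) + (n:ℝ) * ∑ j ∈ range n, Ez' (j+1) := by
      rw [Finset.mul_sum, ← Finset.sum_add_distrib]
      exact Finset.sum_congr rfl fun j _ => by ring
    rw [e1, e2] at hsplit4
    have := hsplitA
    nlinarith [hsplit4, this]
  -- shift the second sum
  have e3 : ∑ j ∈ range n, (-((j:ℝ)+1)) * Ez' (j+1)
      = ∑ r ∈ range (n+1), (-(r:ℝ)) * Ez' r := by
    rw [Finset.sum_range_succ' (fun r => (-(r:ℝ)) * Ez' r) n]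
    simp only [Nat.cast_zero, neg_zero, zero_mul, add_zero]
    apply Finset.sum_congr rfl
    intro j _
    push_cast
    ring
  rw [main, e3, ← Finset.sum_add_distrib]
  apply Finset.sum_congr rfl
  intro r _
  rw [hEz, hEz', W]
  simp only
  have hqe : q^(r*(r+1)/2) = q^(r*(r-1)/2) * q^r := by
    rw [← pow_add]
    congr 1
    have := tri_succ r
    simp only [Nat.add_sub_cancel] at this
    rw [show r*(r+1) = (r+1)*r by ring]
    omega
  rw [hqe, pow_succ]
  ring

-- ### Limit part
section Limit
variable (hq0 : 0 < q) (hq1 : q < 1)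

include hq0 hq1 in
lemma hasProd_euler : ∃ L : ℝ, (Real.exp (-(q / (1-q)^2)) ≤ L) ∧
    Filter.Tendsto (P q) atTop (𝓝 L) ∧ HasProd (fun i : ℕ => 1 - q^(i+1)) L := by
  set c := Real.exp (-(q / (1-q)^2)) with hc
  have hcpos : 0 < c := Real.exp_pos _
  have hbdd : BddBelow (Set.range (P q)) := by
    refine ⟨c, ?_⟩
    rintro x ⟨k, rfl⟩
    exact P_ge_c hq0 hq1 k
  have htend : Filter.Tendsto (P q) atTop (𝓝 (⨅ k, P q k)) :=
    tendsto_atTop_ciInf (P_anti hq0 hq1) hbdd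
  set L := ⨅ k, P q k with hL
  have hcL : c ≤ L := le_ciInf fun k => P_ge_c hq0 hq1 k
  have hLle : ∀ k, L ≤ P q k := fun k => ciInf_le hbdd k
  refine ⟨L, hcL, htend, ?_⟩
  -- HasProd
  rw [HasProd]
  rw [Metric.tendsto_nhds]
  intro ε hε
  -- choose m with P m < L + ε
  have : ∀ᶠ k in atTop, P q k < L + ε := htend.eventually (Filter.Tendsto.eventually_lt_const (by linarith) tendsto_id)
  obtain ⟨m, hm⟩ := this.exists
  rw [SummationFilter.unconditional_filter, Filter.eventually_atTop]
  refine ⟨range m, fun s hs => ?_⟩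
  have hsub : ∀ {u v : Finset ℕ}, u ⊆ v →
      ∏ i ∈ v, (1 - q^(i+1)) ≤ ∏ i ∈ u, (1 - q^(i+1)) := by
    intro u v huv
    rw [← Finset.prod_sdiff huv]
    have h1 : ∏ i ∈ v \ u, (1 - q^(i+1)) ≤ 1 :=
      Finset.prod_le_one (fun i _ => (factor_pos hq0 hq1 i).le)
        (fun i _ => by have := pow_pos hq0 (i+1); linarith)
    have h2 : 0 ≤ ∏ i ∈ u, (1 - q^(i+1)) :=
      Finset.prod_nonneg fun i _ => (factor_pos hq0 hq1 i).le
    nlinarith [Finset.prod_nonneg (fun i (_ : i ∈ v \ u) => (factor_pos hq0 hq1 i).le)]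
  have hub : ∏ i ∈ s, (1 - q^(i+1)) ≤ P q m := hsub hs
  have hlb : L ≤ ∏ i ∈ s, (1 - q^(i+1)) := by
    have h1 : s ⊆ range ((s.sup id) + 1) := Finset.subset_range_sup_succ s
    calc L ≤ P q ((s.sup id)+1) := hLle _
      _ ≤ ∏ i ∈ s, (1 - q^(i+1)) := hsub h1
  rw [Real.dist_eq, abs_lt]
  constructor <;> nlinarith

include hq0 hq1 in
lemma Bb_nonneg (m j : ℕ) : 0 ≤ Bb q m j := by
  rw [Bb]
  split
  · exact div_nonneg (P_pos hq0 hq1 m).le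
      (mul_nonneg (P_pos hq0 hq1 j).le (P_pos hq0 hq1 (m-j)).le)
  · exact le_refl 0

include hq0 hq1 in
lemma Bb_le (m j : ℕ) :
    Bb q m j ≤ 1 / (Real.exp (-(q / (1-q)^2)) * Real.exp (-(q / (1-q)^2))) := by
  set c := Real.exp (-(q / (1-q)^2)) with hc
  have hcpos : 0 < c := Real.exp_pos _
  rw [Bb]
  split
  · apply div_le_div₀ (by norm_num) (P_le_one hq0 hq1 m) (by positivity)
    exact mul_le_mul (P_ge_c hq0 hq1 j) (P_ge_c hq0 hq1 (m-j)) hcpos.le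
      (P_pos hq0 hq1 j).le
  · positivity

lemma W_eq_zero {n r : ℕ} (h : n < r) : W q n r = 0 := by
  rw [W, Bb, if_neg (by omega)]
  ring

include hq0 hq1 in
lemma summable_bound :
    Summable (fun r : ℕ => (r:ℝ) * q^(r*(r-1)/2)) := by
  have hg : Summable (fun r : ℕ => (r:ℝ) * q^(r-1)) := by
    rw [← summable_nat_add_iff 1]
    simp only [Nat.add_sub_cancel]
    have h1 : Summable (fun r : ℕ => (r:ℝ) * q^r) := by
      simpa using summable_pow_mul_geometric_of_norm_lt_one 1
        (by rw [Real.norm_eq_abs, abs_of_nonneg hq0.le]; exact hq1)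
    have h2 : Summable (fun r : ℕ => q^r) := summable_geometric_of_lt_one hq0.le hq1
    have := h1.add h2
    apply this.congr
    intro r
    push_cast
    ring
  apply Summable.of_nonneg_of_le (fun r => by positivity) _ hg
  intro r
  apply mul_le_mul_of_nonneg_left _ (by positivity)
  apply pow_le_pow_of_le_one hq0.le hq1.le
  -- r - 1 ≤ r*(r-1)/2
  rcases r with _ | t
  · simp
  · rcases t with _ | u
    · simp
    · simp only [Nat.add_sub_cancel]
      have h2 := Nat.div_mul_cancel (two_dvd_tri (u+2))
      simp only [Nat.add_sub_cancel, show u+2-1 = u+1 by omega] at h2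
      have : 2*(u+1) ≤ (u+2)*(u+1) := by
        apply Nat.mul_le_mul_right
        omega
      generalize hgen : (u+2)*(u+1) = a at h2 this
      omega

include hq0 hq1 in
lemma key_limit : ∃ L : ℝ, 0 < L ∧ HasProd (fun i : ℕ => 1 - q^(i+1)) L ∧
    L^3 = ∑' r : ℕ, (-1:ℝ)^(r+1) * r * q^(r*(r-1)/2) * (1 - q^r) := by
  obtain ⟨L, hcL, htend, hprod⟩ := hasProd_euler hq0 hq1
  have hLpos : 0 < L := lt_of_lt_of_le (Real.exp_pos _) hcL
  set c := Real.exp (-(q / (1-q)^2)) with hc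
  have hcpos : 0 < c := Real.exp_pos _
  set wlim : ℕ → ℝ := fun r => (-1:ℝ)^(r+1) * r * (1/L) * q^(r*(r-1)/2) * (1-q^r)
    with hwlim
  set bound : ℕ → ℝ := fun r => (r:ℝ) * q^(r*(r-1)/2) * (1/(c*c)) with hbound
  have hb : Summable bound := (summable_bound hq0 hq1).mul_right _
  -- pointwise convergence
  have hW : ∀ r : ℕ, Filter.Tendsto (fun n => W q (n+1) r) atTop (𝓝 (wlim r)) := by
    intro r
    have hBb : Filter.Tendsto (fun n => Bb q (2*(n+1)) ((n+1)+r)) atTop (𝓝 (1/L)) := by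
      have h2 : Filter.Tendsto (fun n : ℕ => P q (2*n+2)) atTop (𝓝 L) :=
        htend.comp (tendsto_atTop_atTop.2 fun b => ⟨b, fun a ha => by omega⟩)
      have h3 : Filter.Tendsto (fun n : ℕ => P q (n+1+r)) atTop (𝓝 L) :=
        htend.comp (tendsto_atTop_atTop.2 fun b => ⟨b, fun a ha => by omega⟩)
      have h4 : Filter.Tendsto (fun n : ℕ => P q (n+1-r)) atTop (𝓝 L) :=
        htend.comp (tendsto_atTop_atTop.2 fun b => ⟨b + r, fun a ha => by omega⟩)
      have h5 : Filter.Tendsto (fun n => P q (2*n+2) / (P q (n+1+r) * P q (n+1-r)))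
          atTop (𝓝 (L/(L*L))) := h2.div (h3.mul h4) (by positivity)
      have h6 : L/(L*L) = 1/L := by field_simp
      rw [h6] at h5
      apply h5.congr'
      filter_upwards [Filter.eventually_ge_atTop r] with n hn
      rw [Bb, if_pos (by omega), show 2*(n+1) - (n+1+r) = n+1-r by omega,
        show 2*(n+1) = 2*n+2 by ring]
    have h7 := ((hBb.const_mul ((-1:ℝ)^(r+1) * (r:ℝ))).mul_const
      (q^(r*(r-1)/2))).mul_const (1-q^r)
    have h8 : ((-1:ℝ)^(r+1) * (r:ℝ)) * (1/L) * q^(r*(r-1)/2) * (1-q^r) = wlim r := by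
      rw [hwlim]
    rw [h8] at h7
    apply h7.congr
    intro n
    rw [W]
  -- bound
  have hWb : ∀ n : ℕ, ∀ r : ℕ, ‖W q (n+1) r‖ ≤ bound r := by
    intro n r
    have hBble := Bb_le hq0 hq1 (2*(n+1)) ((n+1)+r)
    have hBbnn := Bb_nonneg hq0 hq1 (2*(n+1)) ((n+1)+r)
    have hqr : 0 ≤ 1 - q^r ∧ 1 - q^r ≤ 1 := by
      constructor
      · have : q^r ≤ 1 := pow_le_one₀ hq0.le hq1.le
        linarith
      · have : 0 ≤ q^r := by positivity
        linarith
    have habs : ‖W q (n+1) r‖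
        = (r:ℝ) * Bb q (2*(n+1)) ((n+1)+r) * q^(r*(r-1)/2) * (1-q^r) := by
      have hw : W q (n+1) r = (-1:ℝ)^(r+1)
          * ((r:ℝ) * Bb q (2*(n+1)) ((n+1)+r) * q^(r*(r-1)/2) * (1-q^r)) := by
        rw [W]; ring
      have hnn : (0:ℝ) ≤ (r:ℝ) * Bb q (2*(n+1)) ((n+1)+r) * q^(r*(r-1)/2) * (1-q^r) := by
        have h0 : (0:ℝ) ≤ (r:ℝ) := by positivity
        have h1 : (0:ℝ) ≤ q^(r*(r-1)/2) := by positivity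
        exact mul_nonneg (mul_nonneg (mul_nonneg h0 hBbnn) h1) hqr.1
      rw [hw, norm_mul, norm_pow, norm_neg, norm_one, one_pow, one_mul,
        Real.norm_eq_abs, abs_of_nonneg hnn]
    rw [habs, hbound]
    calc (r:ℝ) * Bb q (2*(n+1)) ((n+1)+r) * q^(r*(r-1)/2) * (1-q^r)
        ≤ (r:ℝ) * (1/(c*c)) * q^(r*(r-1)/2) * 1 := by
          gcongr
          all_goals first
            | exact hqr.1
            | exact hBble
            | exact hqr.2
            | positivity
      _ = (r:ℝ) * q^(r*(r-1)/2) * (1/(c*c)) := by ring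
  -- finite sums
  have hts : ∀ n : ℕ, ∑' r : ℕ, W q (n+1) r = P q (n+1) * P q n := by
    intro n
    rw [tsum_eq_sum (s := range (n+2))
      (fun r hr => W_eq_zero (by rw [Finset.mem_range] at hr; omega))]
    have h := finite_jacobi hq0 hq1 (n+1) (by omega)
    simp only [Nat.add_sub_cancel] at h
    exact h.symm
  -- dominated convergence
  have hdom : Filter.Tendsto (fun n => ∑' r : ℕ, W q (n+1) r) atTop
      (𝓝 (∑' r : ℕ, wlim r)) :=
    tendsto_tsum_of_dominated_convergence hb hW (Filter.Eventually.of_forall hWb)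
  have hPP : Filter.Tendsto (fun n => P q (n+1) * P q n) atTop (𝓝 (L*L)) := by
    have h1 : Filter.Tendsto (fun n : ℕ => P q (n+1)) atTop (𝓝 L) :=
      htend.comp (tendsto_atTop_atTop.2 fun b => ⟨b, fun a ha => by omega⟩)
    exact h1.mul htend
  have hLL : L * L = ∑' r : ℕ, wlim r := by
    apply tendsto_nhds_unique _ hdom
    exact (Filter.Tendsto.congr (fun n => (hts n).symm)) hPP
  refine ⟨L, hLpos, hprod, ?_⟩
  calc L^3 = L * (L*L) := by ring
    _ = L * ∑' r : ℕ, wlim r := by rw [hLL]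
    _ = ∑' r : ℕ, L * wlim r := tsum_mul_left.symm
    _ = ∑' r : ℕ, (-1:ℝ)^(r+1) * r * q^(r*(r-1)/2) * (1 - q^r) := by
        apply tsum_congr
        intro r
        rw [hwlim]
        have : L * ((-1:ℝ)^(r+1) * r * (1/L) * q^(r*(r-1)/2) * (1-q^r))
            = ((-1:ℝ)^(r+1) * r * q^(r*(r-1)/2) * (1-q^r)) * (L * (1/L)) := by ring
        rw [this, mul_one_div, div_self hLpos.ne', mul_one]

include hq0 hq1 in
lemma reindex :
    Summable (fun n : ℕ => (-1:ℝ)^n * (2*(n:ℝ)+1) * q^(n*(n+1)/2)) ∧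
    ∑' r : ℕ, (-1:ℝ)^(r+1) * r * q^(r*(r-1)/2) * (1 - q^r)
      = ∑' n : ℕ, (-1:ℝ)^n * (2*(n:ℝ)+1) * q^(n*(n+1)/2) := by
  set u : ℕ → ℝ := fun r => (-1:ℝ)^(r+1) * r * q^(r*(r-1)/2) with hu
  set v : ℕ → ℝ := fun r => (-1:ℝ)^r * r * q^(r*(r+1)/2) with hv
  have hqe : ∀ r : ℕ, q^(r*(r+1)/2) = q^(r*(r-1)/2) * q^r := by
    intro r
    rw [← pow_add]
    congr 1
    have := tri_succ r
    simp only [Nat.add_sub_cancel] at this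
    rw [show r*(r+1) = (r+1)*r by ring]
    omega
  have habs_u : ∀ r : ℕ, ‖u r‖ = (r:ℝ) * q^(r*(r-1)/2) := by
    intro r
    rw [hu]
    simp only
    rw [Real.norm_eq_abs, abs_mul, abs_mul, abs_pow, abs_neg, abs_one, one_pow, one_mul,
      abs_of_nonneg (by positivity : (0:ℝ) ≤ (r:ℝ)),
      abs_of_nonneg (by positivity : (0:ℝ) ≤ q^(r*(r-1)/2))]
  have hsum_u : Summable u := by
    apply Summable.of_norm_bounded (summable_bound hq0 hq1)
    intro r
    rw [habs_u r]
  have hsum_v : Summable v := by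
    apply Summable.of_norm_bounded (summable_bound hq0 hq1)
    intro r
    rw [hv]
    simp only
    rw [Real.norm_eq_abs, abs_mul, abs_mul, abs_pow, abs_neg, abs_one, one_pow, one_mul,
      abs_of_nonneg (by positivity : (0:ℝ) ≤ (r:ℝ)),
      abs_of_nonneg (by positivity : (0:ℝ) ≤ q^(r*(r+1)/2))]
    apply mul_le_mul_of_nonneg_left _ (by positivity)
    apply pow_le_pow_of_le_one hq0.le hq1.le
    exact Nat.div_le_div_right (Nat.mul_le_mul_left r (by omega))
  have hsplit : ∀ r : ℕ, (-1:ℝ)^(r+1) * r * q^(r*(r-1)/2) * (1 - q^r) = u r + v r := by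
    intro r
    rw [hu, hv]
    simp only
    rw [hqe r, pow_succ]
    ring
  have hper : ∀ s : ℕ, (-1:ℝ)^s * (2*(s:ℝ)+1) * q^(s*(s+1)/2) = u (s+1) + v s := by
    intro s
    rw [hu, hv]
    simp only
    rw [show (s+1)*((s+1)-1)/2 = s*(s+1)/2 by
      simp only [Nat.add_sub_cancel]; rw [Nat.mul_comm]]
    push_cast
    rw [pow_succ, pow_succ]
    ring
  have hsum_us : Summable (fun s : ℕ => u (s+1)) := (summable_nat_add_iff 1).2 hsum_u
  have hsum_t : Summable (fun n : ℕ => (-1:ℝ)^n * (2*(n:ℝ)+1) * q^(n*(n+1)/2)) :=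
    (hsum_us.add hsum_v).congr fun s => (hper s).symm
  refine ⟨hsum_t, ?_⟩
  have e1 : ∑' r : ℕ, (-1:ℝ)^(r+1) * r * q^(r*(r-1)/2) * (1 - q^r)
      = (∑' r : ℕ, u r) + ∑' r : ℕ, v r := by
    rw [← Summable.tsum_add hsum_u hsum_v]
    exact tsum_congr hsplit
  have e2 : ∑' r : ℕ, u r = ∑' s : ℕ, u (s+1) := by
    rw [Summable.tsum_eq_zero_add hsum_u]
    have : u 0 = 0 := by rw [hu]; simp
    rw [this, zero_add]
  have e3 : ∑' n : ℕ, (-1:ℝ)^n * (2*(n:ℝ)+1) * q^(n*(n+1)/2)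
      = (∑' s : ℕ, u (s+1)) + ∑' s : ℕ, v s := by
    rw [← Summable.tsum_add hsum_us hsum_v]
    exact tsum_congr hper
  rw [e1, e2, e3]

end Limit
end Jacobi3

/-- Jacobi's identity: the cube of the Euler product equals the alternating series
`∑ (−1)^n (2n+1) q^{n(n+1)/2}`. -/
theorem stmt_3 (q : ℝ) (hq0 : 0 ≤ q) (hq1 : q < 1) :
    Multipliable (fun n : ℕ => (1 - q ^ (n + 1)) ^ 3) ∧
    Summable (fun n : ℕ => (-1 : ℝ) ^ n * (2 * (n : ℝ) + 1) * q ^ (n * (n + 1) / 2)) ∧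
    ∏' n : ℕ, (1 - q ^ (n + 1)) ^ 3
      = ∑' n : ℕ, (-1 : ℝ) ^ n * (2 * (n : ℝ) + 1) * q ^ (n * (n + 1) / 2) := by
  rcases eq_or_lt_of_le hq0 with hq | hq
  · -- q = 0
    subst hq
    have hz : ∀ n : ℕ, n ≠ 0 → ((-1:ℝ)^n * (2*(n:ℝ)+1) * (0:ℝ)^(n*(n+1)/2)) = 0 := by
      intro n hn
      obtain ⟨m, rfl⟩ : ∃ m, n = m+1 := ⟨n-1, by omega⟩
      have h2 : 1 ≤ (m+1)*(m+2)/2 := by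
        rw [Nat.le_div_iff_mul_le (by norm_num)]
        calc 1*2 = 2 := by norm_num
          _ ≤ (m+1)*(m+2) := Nat.mul_le_mul (show 1 ≤ m+1 by omega) (show 2 ≤ m+2 by omega)
      rw [show (m+1)*(m+1+1) = (m+1)*(m+2) by norm_num,
        zero_pow (by omega : (m+1)*(m+2)/2 ≠ 0), mul_zero]
    have hprod1 : (fun n : ℕ => ((1:ℝ) - (0:ℝ)^(n+1))^3) = fun _ => (1:ℝ) :=
      funext fun n => by norm_num
    refine ⟨?_, ?_, ?_⟩
    · rw [hprod1]; exact multipliable_one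
    · apply summable_of_ne_finset_zero (s := {0})
      intro n hn
      simp only [Finset.mem_singleton] at hn
      exact hz n hn
    · rw [hprod1, tprod_one, tsum_eq_single 0 (fun n hn => hz n hn)]
      norm_num
  · -- 0 < q
    obtain ⟨L, hLpos, hprod, hL3⟩ := Jacobi3.key_limit hq hq1
    have h3 := (hprod.mul hprod).mul hprod
    have hfe : (fun i : ℕ => (1 - q^(i+1)) * (1 - q^(i+1)) * (1 - q^(i+1)))
        = fun i : ℕ => (1 - q^(i+1))^3 := funext fun i => by ring
    rw [hfe, show L*L*L = L^3 by ring] at h3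
    obtain ⟨hsum_t, htsum⟩ := Jacobi3.reindex hq hq1
    exact ⟨h3.multipliable, hsum_t, by rw [h3.tprod_eq, hL3, htsum]⟩
end

section
/- For every integer n ≥ 0, the function p_n(θ) = P_n^{(1,−1)}(cos θ) satisfies, for all θ ∈ (0, π), the differential equation (1/2)·p_n''(θ) + ((3/4)·cot(θ/2) + (1/4)·tan(θ/2))·p_n'(θ) = −(n(n+1)/2)·p_n(θ). In other words, p_n is an eigenfunction with eigenvalue −n(n+1)/2 of the operator L = (1/2)(d²/dθ²) + ((3/4)cot(θ/2) + (1/4)tan(θ/2))(d/dθ). -/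
open Real

/-- The Jacobi polynomial of index `(1, −1)`, given by Rodrigues' formula (as a function
on `(−1, 1)`; outside this interval the expression takes junk values). -/
noncomputable def jacobiP (n : ℕ) (x : ℝ) : ℝ :=
  ((-1 : ℝ) ^ n / (2 ^ n * n.factorial)) * ((1 + x) / (1 - x)) *
    iteratedDeriv n (fun y : ℝ => (1 - y) ^ ((n : ℤ) + 1) * (1 + y) ^ ((n : ℤ) - 1)) x

namespace Stmt9Aux

open Polynomial

noncomputable def Pm (m : ℕ) : Polynomial ℝ := (1 - X)^(m+2) * (1 + X)^m
noncomputable def Qm (m : ℕ) : Polynomial ℝ := derivative^[m+1] (Pm m)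
noncomputable def A0 (m : ℕ) : Polynomial ℝ := (1 + X) * Qm m
noncomputable def A1 (m : ℕ) : Polynomial ℝ := (1 - X) * derivative (A0 m) + A0 m
noncomputable def A2 (m : ℕ) : Polynomial ℝ := (1 - X) * derivative (A1 m) + 2 * A1 m
noncomputable def cst (m : ℕ) : ℝ := (-1 : ℝ) ^ (m+1) / (2 ^ (m+1) * (m+1).factorial)

lemma polyIter (n : ℕ) (p : ℝ[X]) :
    iteratedDeriv n (fun x => p.eval x) = fun x => (derivative^[n] p).eval x := by
  induction n with
  | zero => simp
  | succ k ih =>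
    rw [iteratedDeriv_succ, ih, Function.iterate_succ_apply']
    funext x
    exact (derivative^[k] p).deriv

lemma base (m : ℕ) : (1 - X^2) * derivative (Pm m) + (C 2 + C (2*(m:ℝ)+2) * X) * Pm m = 0 := by
  cases m with
  | zero =>
    have hP : Pm 0 = (1 - X)^2 := by simp [Pm]
    have h1 : derivative ((1-X:ℝ[X])^2) = C (2:ℝ) * (1-X) * (-1) := by
      rw [derivative_pow]; push_cast; simp
    rw [hP, h1]
    simp only [map_ofNat, Nat.cast_zero, mul_zero, zero_add]
    ring
  | succ l =>
    have h1 : derivative ((1 - X : ℝ[X])^(l+3)) = C ((l:ℝ)+3) * (1-X)^(l+2) * (-1) := by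
      rw [derivative_pow]; push_cast; simp
    have h2 : derivative ((1 + X : ℝ[X])^(l+1)) = C ((l:ℝ)+1) * (1+X)^l := by
      rw [derivative_pow]; push_cast; simp
    have hP : Pm (l+1) = (1-X)^(l+3) * (1+X)^(l+1) := by rw [Pm]
    rw [hP, derivative_mul, h1, h2]
    have e1 : ((1-X:ℝ[X]))^(l+3) = (1-X)^(l+2) * (1-X) := by ring
    have e2 : ((1+X:ℝ[X]))^(l+1) = (1+X)^l * (1+X) := by ring
    rw [e1, e2]
    push_cast
    simp only [map_add, map_mul, map_one, map_ofNat]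
    ring

lemma steps (m k : ℕ) :
    (1 - X^2) * derivative^[k+2] (Pm m)
      + (C 2 + C (2*(m:ℝ)+2 - 2*((k:ℝ)+1)) * X) * derivative^[k+1] (Pm m)
      + C (((k:ℝ)+1)*(2*(m:ℝ)+2-(k:ℝ))) * derivative^[k] (Pm m) = 0 := by
  induction k with
  | zero =>
    have h := congrArg derivative (base m)
    simp only [derivative_add, derivative_mul, derivative_sub, derivative_one, derivative_C,
      derivative_X, derivative_pow, map_zero] at h
    simp only [Function.iterate_succ_apply', Function.iterate_zero, id_eq, Function.iterate_one]
    push_cast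
    simp only [map_sub, map_add, map_mul, map_one, map_ofNat, map_zero, Nat.cast_ofNat,
      pow_one] at h ⊢
    linear_combination h
  | succ k ih =>
    have h := congrArg derivative ih
    simp only [derivative_add, derivative_mul, derivative_sub, derivative_one, derivative_C,
      derivative_X, derivative_pow, map_zero] at h
    simp only [Function.iterate_succ_apply'] at *
    push_cast
    simp only [map_sub, map_add, map_mul, map_one, map_ofNat, map_zero, Nat.cast_ofNat,
      pow_one] at h ⊢
    linear_combination h

lemma ode (m : ℕ) :
    (1 - X^2) * derivative (derivative (Qm m)) + (2 - 2*X) * derivative (Qm m)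
      + C (((m:ℝ)+1)*((m:ℝ)+2)) * Qm m = 0 := by
  have h := steps m (m+1)
  simp only [Function.iterate_succ_apply'] at h
  have hq : derivative^[m+1] (Pm m) = Qm m := rfl
  simp only [Function.iterate_succ_apply'] at hq
  rw [hq] at h
  push_cast at h
  simp only [map_sub, map_add, map_mul, map_one, map_ofNat, map_zero] at h ⊢
  linear_combination h

lemma keyE (m : ℕ) :
    (1 + X) * A2 m - (2 + 2*X) * A1 m
      + C (((m:ℝ)+1)*((m:ℝ)+2)) * ((1 - X) * A0 m) = 0 := by
  have h := ode m
  simp only [A2, A1, A0, derivative_add, derivative_mul, derivative_sub, derivative_one,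
    derivative_X, map_zero, map_ofNat, derivative_ofNat]
  simp only [map_sub, map_add, map_mul, map_one, map_ofNat, map_zero] at h ⊢
  linear_combination (1 - X^2 : ℝ[X]) * h

lemma jacobi_eq (m : ℕ) {x : ℝ} (hx : x < 1) :
    jacobiP (m+1) x = cst m * (A0 m).eval x / (1 - x) := by
  have hfun : (fun y : ℝ => (1 - y) ^ (((m+1:ℕ) : ℤ) + 1) * (1 + y) ^ (((m+1:ℕ) : ℤ) - 1))
      = fun y => (Pm m).eval y := by
    funext y
    have e1 : ((m+1:ℕ) : ℤ) + 1 = ((m+2 : ℕ) : ℤ) := by push_cast; ring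
    have e2 : ((m+1:ℕ) : ℤ) - 1 = ((m : ℕ) : ℤ) := by push_cast; ring
    rw [e1, e2, zpow_natCast, zpow_natCast]
    simp [Pm]
  have h1x : (1:ℝ) - x ≠ 0 := sub_ne_zero.2 (ne_of_gt (by linarith))
  rw [jacobiP, hfun, polyIter]
  have hq : derivative^[m+1] (Pm m) = Qm m := rfl
  rw [hq]
  have hA0 : (A0 m).eval x = (1 + x) * (Qm m).eval x := by simp [A0]
  rw [hA0, cst]
  field_simp

lemma hasDeriv1 (m : ℕ) {s : ℝ} (hx : 1 - Real.cos s ≠ 0) :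
    HasDerivAt (fun t => cst m * (A0 m).eval (Real.cos t) / (1 - Real.cos t))
      (cst m * (A1 m).eval (Real.cos s) / (1 - Real.cos s)^2 * (-Real.sin s)) s := by
  have h1 : HasDerivAt (fun y : ℝ => cst m * (A0 m).eval y / (1 - y))
      (cst m * (A1 m).eval (Real.cos s) / (1 - Real.cos s)^2) (Real.cos s) := by
    have hnum := ((A0 m).hasDerivAt (Real.cos s)).const_mul (cst m)
    have hden : HasDerivAt (fun y : ℝ => 1 - y) (-1) (Real.cos s) := by
      simpa using (hasDerivAt_id (Real.cos s)).const_sub (1:ℝ)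
    have h := hnum.div hden hx
    refine h.congr_deriv ?_
    have hA1 : (A1 m).eval (Real.cos s)
        = (1 - Real.cos s) * (derivative (A0 m)).eval (Real.cos s) + (A0 m).eval (Real.cos s) := by
      simp [A1]
    rw [hA1]; ring
  have h2 := h1.comp s (Real.hasDerivAt_cos s)
  simpa [Function.comp_def] using h2

lemma hasDeriv2 (m : ℕ) {s : ℝ} (hx : 1 - Real.cos s ≠ 0) :
    HasDerivAt (fun t => cst m * (A1 m).eval (Real.cos t) / (1 - Real.cos t)^2 * (-Real.sin t))
      (cst m * (A2 m).eval (Real.cos s) / (1 - Real.cos s)^3 * (-Real.sin s) * (-Real.sin s)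
        + cst m * (A1 m).eval (Real.cos s) / (1 - Real.cos s)^2 * (-Real.cos s)) s := by
  have h1 : HasDerivAt (fun y : ℝ => cst m * (A1 m).eval y / (1 - y)^2)
      (cst m * (A2 m).eval (Real.cos s) / (1 - Real.cos s)^3) (Real.cos s) := by
    have hnum := ((A1 m).hasDerivAt (Real.cos s)).const_mul (cst m)
    have hden0 : HasDerivAt (fun y : ℝ => 1 - y) (-1) (Real.cos s) := by
      simpa using (hasDerivAt_id (Real.cos s)).const_sub (1:ℝ)
    have hden := hden0.pow 2
    have hpow : ((1:ℝ) - Real.cos s)^2 ≠ 0 := pow_ne_zero 2 hx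
    have h := hnum.div hden hpow
    refine h.congr_deriv ?_
    have hA2 : (A2 m).eval (Real.cos s)
        = (1 - Real.cos s) * (derivative (A1 m)).eval (Real.cos s)
          + 2 * (A1 m).eval (Real.cos s) := by
      simp [A2]
    rw [hA2]
    simp only [Pi.pow_apply]
    field_simp
    ring
  have hcomp := h1.comp s (Real.hasDerivAt_cos s)
  have hsin : HasDerivAt (fun t : ℝ => -Real.sin t) (-Real.cos s) s := (Real.hasDerivAt_sin s).neg
  have h := hcomp.mul hsin
  simpa [Function.comp_def, Pi.mul_def] using h

end Stmt9Aux

/-- `p_n(θ) = P_n^{(1,−1)}(cos θ)` is an eigenfunction of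
`L = (1/2) d²/dθ² + ((3/4)cot(θ/2) + (1/4)tan(θ/2)) d/dθ` with eigenvalue `−n(n+1)/2`. -/
theorem stmt_9 (n : ℕ) (θ : ℝ) (hθ : θ ∈ Set.Ioo 0 Real.pi) :
    (1 / 2) * deriv (deriv (fun s : ℝ => jacobiP n (Real.cos s))) θ +
        ((3 / 4) * Real.cot (θ / 2) + (1 / 4) * Real.tan (θ / 2)) *
          deriv (fun s : ℝ => jacobiP n (Real.cos s)) θ
      = -((n : ℝ) * ((n : ℝ) + 1) / 2) * jacobiP n (Real.cos θ) := by
  open Stmt9Aux Polynomial in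
  obtain ⟨hθ0, hθπ⟩ := hθ
  have hθmem : θ ∈ Set.Ioo 0 Real.pi := ⟨hθ0, hθπ⟩
  have hsinθ : 0 < Real.sin θ := Real.sin_pos_of_pos_of_lt_pi hθ0 hθπ
  have hcoslt : ∀ s ∈ Set.Ioo 0 Real.pi, Real.cos s < 1 := by
    intro s hs
    have h1 := Real.sin_pos_of_pos_of_lt_pi hs.1 hs.2
    nlinarith [Real.sin_sq_add_cos_sq s]
  have hcosgt : ∀ s ∈ Set.Ioo 0 Real.pi, -1 < Real.cos s := by
    intro s hs
    have h1 := Real.sin_pos_of_pos_of_lt_pi hs.1 hs.2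
    nlinarith [Real.sin_sq_add_cos_sq s]
  have hx : (1:ℝ) - Real.cos θ ≠ 0 := sub_ne_zero.2 (ne_of_gt (by linarith [hcoslt θ hθmem]))
  -- half angle
  have hs2 : 0 < Real.sin (θ/2) :=
    Real.sin_pos_of_pos_of_lt_pi (by linarith) (by linarith [Real.pi_pos])
  have hc2 : 0 < Real.cos (θ/2) := Real.cos_pos_of_mem_Ioo ⟨by linarith [Real.pi_pos], by linarith⟩
  have hsin2 : Real.sin θ = 2 * Real.sin (θ/2) * Real.cos (θ/2) := by
    have h := Real.sin_two_mul (θ/2)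
    rwa [show 2*(θ/2) = θ by ring] at h
  have hcos2 : Real.cos θ = 2 * Real.cos (θ/2)^2 - 1 := by
    have h := Real.cos_two_mul (θ/2)
    rwa [show 2*(θ/2) = θ by ring] at h
  have hpyth2 := Real.sin_sq_add_cos_sq (θ/2)
  have hW : (3/4) * Real.cot (θ/2) + (1/4) * Real.tan (θ/2)
      = (2 + Real.cos θ) / (2 * Real.sin θ) := by
    rw [Real.cot_eq_cos_div_sin, Real.tan_eq_sin_div_cos, hsin2, hcos2]
    field_simp
    nlinarith [hpyth2]
  cases n with
  | zero =>
    have hEq : Set.EqOn (fun s => jacobiP 0 (Real.cos s)) (fun _ => (1:ℝ)) (Set.Ioo 0 Real.pi) := by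
      intro s hs
      have h1 : (1:ℝ) - Real.cos s ≠ 0 := sub_ne_zero.2 (ne_of_gt (by linarith [hcoslt s hs]))
      have h2 : (1:ℝ) + Real.cos s ≠ 0 := by
        have := hcosgt s hs; intro h; linarith
      simp only [jacobiP, iteratedDeriv_zero, Nat.cast_zero, pow_zero, Nat.factorial_zero]
      norm_num
      field_simp
    have hd : Set.EqOn (deriv (fun s => jacobiP 0 (Real.cos s))) (fun _ => (0:ℝ))
        (Set.Ioo 0 Real.pi) := by
      intro s hs
      rw [(hEq.eventuallyEq_of_mem (isOpen_Ioo.mem_nhds hs)).deriv_eq]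
      simp
    have hd2 : deriv (deriv (fun s => jacobiP 0 (Real.cos s))) θ = 0 := by
      rw [(hd.eventuallyEq_of_mem (isOpen_Ioo.mem_nhds hθmem)).deriv_eq]
      simp
    rw [hd2, hd hθmem]
    norm_num
  | succ m =>
    have hFG : Set.EqOn (fun s => jacobiP (m+1) (Real.cos s))
        (fun t => cst m * (A0 m).eval (Real.cos t) / (1 - Real.cos t)) (Set.Ioo 0 Real.pi) :=
      fun s hs => jacobi_eq m (hcoslt s hs)
    have hderivF : Set.EqOn (deriv (fun s => jacobiP (m+1) (Real.cos s)))
        (fun t => cst m * (A1 m).eval (Real.cos t) / (1 - Real.cos t)^2 * (-Real.sin t))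
        (Set.Ioo 0 Real.pi) := by
      intro s hs
      rw [(hFG.eventuallyEq_of_mem (isOpen_Ioo.mem_nhds hs)).deriv_eq]
      exact (hasDeriv1 m (sub_ne_zero.2 (ne_of_gt (by linarith [hcoslt s hs])))).deriv
    have hd1 : deriv (fun s => jacobiP (m+1) (Real.cos s)) θ
        = cst m * (A1 m).eval (Real.cos θ) / (1 - Real.cos θ)^2 * (-Real.sin θ) := hderivF hθmem
    have hd2 : deriv (deriv (fun s => jacobiP (m+1) (Real.cos s))) θ
        = cst m * (A2 m).eval (Real.cos θ) / (1 - Real.cos θ)^3 * (-Real.sin θ) * (-Real.sin θ)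
          + cst m * (A1 m).eval (Real.cos θ) / (1 - Real.cos θ)^2 * (-Real.cos θ) := by
      rw [(hderivF.eventuallyEq_of_mem (isOpen_Ioo.mem_nhds hθmem)).deriv_eq]
      exact (hasDeriv2 m hx).deriv
    have hj : jacobiP (m+1) (Real.cos θ) = cst m * (A0 m).eval (Real.cos θ) / (1 - Real.cos θ) :=
      jacobi_eq m (hcoslt θ hθmem)
    have hE := congrArg (eval (Real.cos θ)) (keyE m)
    simp only [eval_add, eval_sub, eval_mul, eval_ofNat, eval_one, eval_X, eval_C,
      eval_zero] at hE
    have hsne : Real.sin θ ≠ 0 := ne_of_gt hsinθ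
    rw [hd1, hd2, hj, hW]
    push_cast
    set k := cst m with hk
    set a0 := eval (Real.cos θ) (A0 m) with ha0
    set a1 := eval (Real.cos θ) (A1 m) with ha1
    set a2 := eval (Real.cos θ) (A2 m) with ha2
    set c := Real.cos θ with hc
    set s := Real.sin θ with hsdef
    set M := (m:ℝ) with hM
    have hss : s * s = (1-c)*(1+c) := by
      nlinarith [Real.sin_sq_add_cos_sq θ]
    have t1 : k * a2 / (1-c)^3 * -s * -s = k * (a2 * (1+c)) / (1-c)^2 := by
      rw [div_mul_eq_mul_div, div_mul_eq_mul_div, div_eq_div_iff (by positivity) (by positivity)]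
      ring_nf
      linear_combination (k * a2 * (1-c)^2) * hss
    have t2 : (2 + c)/(2*s) * (k * a1 / (1-c)^2 * -s) = -((2+c) * (k * a1)) / (2 * (1-c)^2) := by
      field_simp
    have t3 : -((M+1) * ((M+1)+1)/2) * (k * a0 / (1-c))
        = -((M+1) * (M+2)/2) * (k * (a0 * (1-c))) / (1-c)^2 := by
      field_simp
      ring
    rw [t1, t2, t3]
    field_simp
    linear_combination (k * (1-c)^2 * 2 + k * (-2*c^2 + 4*c - 1)) * hE
end
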